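/- Let k be a field of characteristic zero, let Ω be the 3-dimensional k-vector space with basis {≺, ≻, ∘}, let ⋆ = ≺ + ≻ + ∘, and let Λ_T ⊆ (Ω⊗Ω) ⊕ (Ω⊗Ω) be the dendriform trialgebra relation space, namely the span of (≺⊗≺, ≺⊗⋆), (≻⊗≺, ≻⊗≺), (⋆⊗≻, ≻⊗≻), (≻⊗∘, ≻⊗∘), (≺⊗∘, ∘⊗≻), (∘⊗≺, ∘⊗≺), and (∘⊗∘, ∘⊗∘). Then the linear maps α, β : Ω → k determined by α(≺) = 1, α(≻) = α(∘) = 0, β(≻) = 1, β(≺) = β(∘) = 0 form a unit action for ⋆ that is coherent with Λ_T. -/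

import Mathlib

open TensorProduct

section Defs

variable {k : Type*} [Field k]

noncomputable def contrL {Ω : Type*} [AddCommGroup Ω] [Module k Ω]
    (φ : Module.Dual k Ω) : Ω ⊗[k] Ω →ₗ[k] Ω :=
  (TensorProduct.lid k Ω).toLinearMap ∘ₗ TensorProduct.map φ LinearMap.id

noncomputable def contrR {Ω : Type*} [AddCommGroup Ω] [Module k Ω]
    (φ : Module.Dual k Ω) : Ω ⊗[k] Ω →ₗ[k] Ω :=
  (TensorProduct.rid k Ω).toLinearMap ∘ₗ TensorProduct.map LinearMap.id φ

noncomputable def contrB {Ω₁ Ω₂ : Type*} [AddCommGroup Ω₁] [Module k Ω₁]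
    [AddCommGroup Ω₂] [Module k Ω₂]
    (φ : Module.Dual k Ω₁) (ψ : Module.Dual k Ω₂) : Ω₁ ⊗[k] Ω₂ →ₗ[k] k :=
  (TensorProduct.lid k k).toLinearMap ∘ₗ TensorProduct.map φ ψ

/-- The coherence equations (C1)-(C5) for a pair `uv ∈ (Ω⊗Ω) × (Ω⊗Ω)`. -/
def CoherenceEqs {Ω : Type*} [AddCommGroup Ω] [Module k Ω]
    (α β : Module.Dual k Ω) (star : Ω)
    (uv : (Ω ⊗[k] Ω) × (Ω ⊗[k] Ω)) : Prop :=
  contrL β uv.1 = contrL β uv.2 ∧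
  contrL α uv.1 = contrR β uv.2 ∧
  contrR α uv.1 = contrR α uv.2 ∧
  contrR β uv.1 = contrB β β uv.2 • star ∧
  contrB α α uv.1 • star = contrL α uv.2

/-- The compatibility equations (C1)-(C3). -/
def CompatEqs {Ω : Type*} [AddCommGroup Ω] [Module k Ω]
    (α β : Module.Dual k Ω)
    (uv : (Ω ⊗[k] Ω) × (Ω ⊗[k] Ω)) : Prop :=
  contrL β uv.1 = contrL β uv.2 ∧
  contrL α uv.1 = contrR β uv.2 ∧
  contrR α uv.1 = contrR α uv.2

def IsCoherent {Ω : Type*} [AddCommGroup Ω] [Module k Ω]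
    (α β : Module.Dual k Ω) (star : Ω)
    (Λ : Submodule k ((Ω ⊗[k] Ω) × (Ω ⊗[k] Ω))) : Prop :=
  ∀ uv ∈ Λ, CoherenceEqs α β star uv

def IsCompatible {Ω : Type*} [AddCommGroup Ω] [Module k Ω]
    (α β : Module.Dual k Ω)
    (Λ : Submodule k ((Ω ⊗[k] Ω) × (Ω ⊗[k] Ω))) : Prop :=
  ∀ uv ∈ Λ, CompatEqs α β uv

end Defs


section Aux
variable {k : Type*} [Field k] {Ω : Type*} [AddCommGroup Ω] [Module k Ω]

@[simp] lemma contrL_tmul (φ : Module.Dual k Ω) (a b : Ω) :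
    contrL φ (a ⊗ₜ[k] b) = φ a • b := by
  simp [contrL]

@[simp] lemma contrR_tmul (φ : Module.Dual k Ω) (a b : Ω) :
    contrR φ (a ⊗ₜ[k] b) = φ b • a := by
  simp [contrR]

@[simp] lemma contrB_tmul (φ ψ : Module.Dual k Ω) (a b : Ω) :
    contrB φ ψ (a ⊗ₜ[k] b) = φ a * ψ b := by
  simp [contrB]

lemma coherence_zero (α β : Module.Dual k Ω) (star : Ω) :
    CoherenceEqs α β star (0 : (Ω ⊗[k] Ω) × (Ω ⊗[k] Ω)) := by
  simp [CoherenceEqs]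

lemma coherence_add (α β : Module.Dual k Ω) (star : Ω)
    {x y : (Ω ⊗[k] Ω) × (Ω ⊗[k] Ω)}
    (hx : CoherenceEqs α β star x) (hy : CoherenceEqs α β star y) :
    CoherenceEqs α β star (x + y) := by
  obtain ⟨h1,h2,h3,h4,h5⟩ := hx
  obtain ⟨g1,g2,g3,g4,g5⟩ := hy
  refine ⟨?_,?_,?_,?_,?_⟩ <;>
    simp only [Prod.fst_add, Prod.snd_add, map_add, h1,h2,h3,h4,h5,g1,g2,g3,g4,g5,
      add_smul]

lemma coherence_smul (α β : Module.Dual k Ω) (star : Ω)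
    (c : k) {x : (Ω ⊗[k] Ω) × (Ω ⊗[k] Ω)}
    (hx : CoherenceEqs α β star x) :
    CoherenceEqs α β star (c • x) := by
  obtain ⟨h1,h2,h3,h4,h5⟩ := hx
  refine ⟨?_,?_,?_,?_,?_⟩
  · simp only [Prod.smul_fst, Prod.smul_snd, map_smul, h1]
  · simp only [Prod.smul_fst, Prod.smul_snd, map_smul, h2]
  · simp only [Prod.smul_fst, Prod.smul_snd, map_smul, h3]
  · simp only [Prod.smul_fst, Prod.smul_snd, map_smul, h4, smul_smul,
      smul_eq_mul]
  · rw [Prod.smul_fst, Prod.smul_snd, map_smul, map_smul, smul_eq_mul,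
      mul_smul, h5]

end Aux

/-- The standard unit action on the dendriform trialgebra is coherent. -/
theorem dendriform_trialgebra_coherent
    {k : Type*} [Field k] [CharZero k]
    {Ω : Type*} [AddCommGroup Ω] [Module k Ω]
    (b : Module.Basis (Fin 3) k Ω)
    (star : Ω) (hstar : star = b 0 + b 1 + b 2)
    (ΛT : Submodule k ((Ω ⊗[k] Ω) × (Ω ⊗[k] Ω)))
    (hΛ : ΛT = Submodule.span k
      ({(b 0 ⊗ₜ[k] b 0, b 0 ⊗ₜ[k] star),
        (b 1 ⊗ₜ[k] b 0, b 1 ⊗ₜ[k] b 0),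
        (star ⊗ₜ[k] b 1, b 1 ⊗ₜ[k] b 1),
        (b 1 ⊗ₜ[k] b 2, b 1 ⊗ₜ[k] b 2),
        (b 0 ⊗ₜ[k] b 2, b 2 ⊗ₜ[k] b 1),
        (b 2 ⊗ₜ[k] b 0, b 2 ⊗ₜ[k] b 0),
        (b 2 ⊗ₜ[k] b 2, b 2 ⊗ₜ[k] b 2)} :
        Set ((Ω ⊗[k] Ω) × (Ω ⊗[k] Ω))))
    (α β : Module.Dual k Ω)
    (hα0 : α (b 0) = 1) (hα1 : α (b 1) = 0) (hα2 : α (b 2) = 0)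
    (hβ0 : β (b 0) = 0) (hβ1 : β (b 1) = 1) (hβ2 : β (b 2) = 0) :
    α star = 1 ∧ β star = 1 ∧ IsCoherent α β star ΛT := by
  subst hstar hΛ
  refine ⟨by simp [hα0,hα1,hα2], by simp [hβ0,hβ1,hβ2], ?_⟩
  intro uv huv
  induction huv using Submodule.span_induction with
  | mem x hx =>
    simp only [Set.mem_insert_iff, Set.mem_singleton_iff] at hx
    rcases hx with h|h|h|h|h|h|h <;> subst h <;>
      refine ⟨?_,?_,?_,?_,?_⟩ <;>
      simp [CoherenceEqs, TensorProduct.tmul_add, TensorProduct.add_tmul,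
        hα0,hα1,hα2,hβ0,hβ1,hβ2, smul_add, add_smul]
  | zero => exact coherence_zero α β _
  | add x y _ _ hx hy => exact coherence_add α β _ hx hy
  | smul c x _ hx => exact coherence_smul α β _ c hx
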